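/- Let P : ℝ^d → ℝ be twice continuously differentiable with L-Lipschitz Hessian, and let x* be a point with largest eigenvalue of ∇²P(x*) (in absolute value) equal to Γ. Let x_{t-1} ∈ ℝ^d and suppose Δ ∈ ℝ^d satisfies Δ = ∇²P(x_{t-1})(x_{t-1} - x*). For ρ > 0 and η > 0, define F = ΔΔᵀ + ρI and the update x_t = x_{t-1} - η F⁻¹ Δ. Then ‖x_t - x*‖ ≤ ε₁‖x_{t-1} - x*‖ + ε₂‖x_{t-1} - x*‖², where ε₁ = 1 + Γη/ρ + Γη‖Δ‖²/(ρ² + ρΔᵀΔ) and ε₂ = Lη/ρ + Lη‖Δ‖²/(ρ² + ρΔᵀΔ). -/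

import Mathlib

/-!
The Sherman–Morrison formula gives `F⁻¹ Δ = (ρ + ‖Δ‖²)⁻¹ Δ`, so the step moves `x_{t-1}` along
`Δ` by at most `η/ρ + η‖Δ‖²/(ρ² + ρ‖Δ‖²)` times `‖Δ‖`. Writing `∇²P(x_{t-1})` as `∇²P(x*)` plus a
perturbation of norm at most `L‖x_{t-1} - x*‖` gives `‖Δ‖ ≤ (Γ + L‖x_{t-1} - x*‖)‖x_{t-1} - x*‖`,
and the triangle inequality finishes.
-/

open Matrix

namespace Matrix

variable {n K : Type*} [Fintype n] [DecidableEq n] [Field K]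

theorem inv_vecMulVec_add_smul_one (u w : n → K) {ρ : K} (hρ : ρ ≠ 0) (hρuw : ρ + w ⬝ᵥ u ≠ 0) :
    (vecMulVec u w + ρ • (1 : Matrix n n K))⁻¹ =
      ρ⁻¹ • (1 : Matrix n n K) - (ρ ^ 2 + ρ * (w ⬝ᵥ u))⁻¹ • vecMulVec u w := by
  apply inv_eq_right_inv
  set c := (ρ ^ 2 + ρ * (w ⬝ᵥ u))⁻¹
  have hcoeff : ρ⁻¹ - c * (w ⬝ᵥ u) - ρ * c = 0 := by
    simp only [c]
    field_simp
    ring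
  calc _ = (ρ⁻¹ - c * (w ⬝ᵥ u) - ρ * c) • vecMulVec u w + (ρ * ρ⁻¹) • (1 : Matrix n n K) := by
        simp only [add_mul, mul_sub, smul_mul_assoc, mul_smul_comm, vecMulVec_mul_vecMulVec,
          vecMulVec_smul, one_mul, mul_one]
        module
    _ = 1 := by rw [hcoeff, mul_inv_cancel₀ hρ]; simp

theorem inv_vecMulVec_self_add_smul_one_mulVec (v : n → K) {ρ : K} (hρ : ρ ≠ 0)
    (hρv : ρ + v ⬝ᵥ v ≠ 0) :
    (vecMulVec v v + ρ • (1 : Matrix n n K))⁻¹ *ᵥ v = (ρ + v ⬝ᵥ v)⁻¹ • v := by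
  rw [inv_vecMulVec_add_smul_one v v hρ hρv, sub_mulVec, smul_mulVec, one_mulVec, smul_mulVec,
    vecMulVec_mulVec, op_smul_eq_smul, smul_smul, ← sub_smul]
  congr 1
  field_simp
  ring

end Matrix

theorem EuclideanSpace.norm_sq_eq_dotProduct {n : Type*} [Fintype n] (x : EuclideanSpace ℝ n) :
    ‖x‖ ^ 2 = x ⬝ᵥ x := by
  rw [← real_inner_self_eq_norm_sq, EuclideanSpace.inner_eq_star_dotProduct, star_trivial]

theorem ContinuousLinearMap.norm_apply_le_of_norm_sub_le {𝕜 E F : Type*}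
    [NontriviallyNormedField 𝕜] [SeminormedAddCommGroup E] [SeminormedAddCommGroup F]
    [NormedSpace 𝕜 E] [NormedSpace 𝕜 F]
    {A B : E →L[𝕜] F} {c : ℝ} (h : ‖A - B‖ ≤ c) (x : E) : ‖A x‖ ≤ (‖B‖ + c) * ‖x‖ := by
  calc ‖A x‖ ≤ ‖A‖ * ‖x‖ := A.le_opNorm x
    _ ≤ (‖B‖ + c) * ‖x‖ := by
      gcongr
      calc ‖A‖ ≤ ‖B‖ + ‖A - B‖ := norm_le_insert' _ _
        _ ≤ ‖B‖ + c := by gcongr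

theorem pfedsop_linear_quadratic_convergence_general {d : ℕ}
    (Hess : EuclideanSpace ℝ (Fin d) → Matrix (Fin d) (Fin d) ℝ)
    (L : ℝ)
    (hLip : ∀ x y : EuclideanSpace ℝ (Fin d),
      ‖Matrix.toEuclideanCLM (𝕜 := ℝ) (Hess x - Hess y)‖ ≤ L * ‖x - y‖)
    (xstar xprev : EuclideanSpace ℝ (Fin d)) (Γ : ℝ)
    (hΓ : ‖Matrix.toEuclideanCLM (𝕜 := ℝ) (Hess xstar)‖ = Γ)
    (Δ : EuclideanSpace ℝ (Fin d))
    (hΔ : (Δ : Fin d → ℝ) = (Hess xprev).mulVec (xprev - xstar))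
    (ρ η : ℝ) (hρ : 0 < ρ) (hη : 0 < η)
    (xt : EuclideanSpace ℝ (Fin d))
    (hxt : xt = xprev -
      (WithLp.equiv 2 (Fin d → ℝ)).symm
        (η • (vecMulVec Δ Δ + ρ • (1 : Matrix (Fin d) (Fin d) ℝ))⁻¹.mulVec Δ)) :
    ‖xt - xstar‖ ≤
      (1 + Γ * η / ρ + Γ * η * ‖Δ‖ ^ 2 / (ρ ^ 2 + ρ * (Δ ⬝ᵥ Δ))) * ‖xprev - xstar‖ +
      (L * η / ρ + L * η * ‖Δ‖ ^ 2 / (ρ ^ 2 + ρ * (Δ ⬝ᵥ Δ))) * ‖xprev - xstar‖ ^ 2 := by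
  set r := ‖xprev - xstar‖
  rw [EuclideanSpace.norm_sq_eq_dotProduct]
  set s : ℝ := Δ ⬝ᵥ Δ
  have hs : 0 ≤ s := by simp only [s, ← EuclideanSpace.norm_sq_eq_dotProduct]; positivity
  have hstep : xt - xstar = (xprev - xstar) - (η * (ρ + s)⁻¹) • Δ := by
    rw [hxt, inv_vecMulVec_self_add_smul_one_mulVec _ hρ.ne' (by positivity), smul_smul,
      sub_right_comm]
    rfl
  have hΔ_le : ‖Δ‖ ≤ (Γ + L * r) * r := by
    have hΔ' : Δ = toEuclideanCLM (𝕜 := ℝ) (Hess xprev) (xprev - xstar) :=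
      WithLp.ofLp_injective 2 hΔ
    rw [hΔ', ← hΓ]
    exact ContinuousLinearMap.norm_apply_le_of_norm_sub_le (by rw [← map_sub]; exact hLip _ _) _
  have hLr : 0 ≤ L * r := (norm_nonneg _).trans (hLip xprev xstar)
  have hΓ0 : 0 ≤ Γ := hΓ ▸ norm_nonneg _
  have hcoeff : η * (ρ + s)⁻¹ ≤ η / ρ + η * s / (ρ ^ 2 + ρ * s) := by
    have : η * (ρ + s)⁻¹ ≤ η / ρ := by
      rw [← div_eq_mul_inv]; gcongr; linarith
    have : 0 ≤ η * s / (ρ ^ 2 + ρ * s) := by positivity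
    linarith
  calc ‖xt - xstar‖ ≤ r + η * (ρ + s)⁻¹ * ‖Δ‖ := by
        rw [hstep]
        refine (norm_sub_le _ _).trans_eq ?_
        rw [norm_smul, Real.norm_of_nonneg (by positivity)]
    _ ≤ r + (η / ρ + η * s / (ρ ^ 2 + ρ * s)) * ((Γ + L * r) * r) := by
        gcongr
    _ = _ := by ring

/-- Theorem 1 of the paper: linear-quadratic convergence guarantee of the pFedSOP
personalized-model update `x_t = x_{t-1} - η F⁻¹ Δ` with `F = ΔΔᵀ + ρI`, where
`Hess` is the (symmetric, L-Lipschitz) Hessian of the twice continuously differentiable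
objective `P`, `Γ` is the operator norm (largest eigenvalue in absolute value) of the
Hessian at the optimum `x*`, and `Δ = ∇²P(x_{t-1})(x_{t-1} - x*)`. -/
theorem pfedsop_linear_quadratic_convergence {d : ℕ}
    (P : EuclideanSpace ℝ (Fin d) → ℝ)
    (Hess : EuclideanSpace ℝ (Fin d) → Matrix (Fin d) (Fin d) ℝ)
    (hP : ContDiff ℝ 2 P)
    (hHess : ∀ x : EuclideanSpace ℝ (Fin d), ∀ u v : EuclideanSpace ℝ (Fin d),
      (iteratedFDeriv ℝ 2 P x) ![u, v] = (u : Fin d → ℝ) ⬝ᵥ (Hess x).mulVec v)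
    (hsymm : ∀ x, (Hess x).IsSymm)
    (L : ℝ)
    (hLip : ∀ x y : EuclideanSpace ℝ (Fin d),
      ‖Matrix.toEuclideanCLM (𝕜 := ℝ) (Hess x - Hess y)‖ ≤ L * ‖x - y‖)
    (xstar xprev : EuclideanSpace ℝ (Fin d)) (Γ : ℝ)
    (hΓ : ‖Matrix.toEuclideanCLM (𝕜 := ℝ) (Hess xstar)‖ = Γ)
    (Δ : EuclideanSpace ℝ (Fin d))
    (hΔ : (Δ : Fin d → ℝ) = (Hess xprev).mulVec (xprev - xstar))
    (ρ η : ℝ) (hρ : 0 < ρ) (hη : 0 < η)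
    (xt : EuclideanSpace ℝ (Fin d))
    (hxt : xt = xprev -
      (WithLp.equiv 2 (Fin d → ℝ)).symm
        (η • (vecMulVec Δ Δ + ρ • (1 : Matrix (Fin d) (Fin d) ℝ))⁻¹.mulVec Δ)) :
    ‖xt - xstar‖ ≤
      (1 + Γ * η / ρ + Γ * η * ‖Δ‖ ^ 2 / (ρ ^ 2 + ρ * (Δ ⬝ᵥ Δ))) * ‖xprev - xstar‖ +
      (L * η / ρ + L * η * ‖Δ‖ ^ 2 / (ρ ^ 2 + ρ * (Δ ⬝ᵥ Δ))) * ‖xprev - xstar‖ ^ 2 :=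
  pfedsop_linear_quadratic_convergence_general Hess L hLip xstar xprev Γ hΓ Δ hΔ ρ η hρ hη xt hxt
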